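/- arXiv:1512.01008 — 2 statements merged into one kernel-verified Lean document; each statement's English description precedes it below -/
import Mathlib

section
/- For all integers n \ge 3, b_n < R_{n+1}/R_n < b_{n+1}, where b_n = (3 - 9/(2n)) + \sqrt{2}(2 - 3/n). -/
noncomputable def R (n : ℕ) : ℚ :=
  ∑ k ∈ Finset.range (n + 1),
    (Nat.choose n k : ℚ) * (Nat.choose (n + k) k : ℚ) * (1 / (2 * (k : ℚ) - 1))

noncomputable def b (n : ℕ) : ℝ :=
  (3 - 9 / (2 * (n : ℝ))) + Real.sqrt 2 * (2 - 3 / (n : ℝ))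

/-!
Creative telescoping gives the recurrence
`(n + 3) R (n + 3) = (7n + 13) R (n + 2) - (7n + 15) R (n + 1) + (n + 1) R n`.
Writing `κ = 3 + 2√2 = (1 + √2)²` we have `2n · b n = (2n - 3) κ`, so the claim says that
`(2n - 3) κ R n < 2n R (n + 1)` and `(2n + 2) R (n + 1) < (2n - 1) κ R n`.
By the recurrence, `R (n + 3) / R (n + 2)` increases with `R (n + 2) / R (n + 1)` and decreases
with `R (n + 1) / R n`, so the bounds at `n` and `n + 1` propagate to `n + 2` as soon as they hold
at the extreme values of these ratios; after clearing denominators and using `κ² = 6κ - 1` this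
is a pair of polynomial inequalities in `n` and `κ`, valid for `n ≥ 4`. The cases `n = 3, 4, 5`
are checked directly from `R 3, …, R 6 = 25, 87, 329, 1359`.
-/

open Finset

section Binomial

variable {K : Type*} [CommRing K]

theorem cast_choose_mul_succ_eq (m k : ℕ) :
    (m.choose k : K) * (m + 1) = ((m + 1).choose k : K) * (m + 1 - k) := by
  rcases le_or_gt k (m + 1) with h | h
  · have := congrArg (Nat.cast (R := K)) (Nat.choose_mul_succ_eq m k)
    push_cast [Nat.cast_sub h] at this
    exact this
  · simp [Nat.choose_eq_zero_of_lt h, Nat.choose_eq_zero_of_lt (by omega : m < k)]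

theorem cast_choose_succ_right_eq (m k : ℕ) :
    (m.choose (k + 1) : K) * (k + 1) = (m.choose k : K) * (m - k) := by
  rcases le_or_gt k m with h | h
  · have := congrArg (Nat.cast (R := K)) (Nat.choose_succ_right_eq m k)
    push_cast [Nat.cast_sub h] at this
    exact this
  · simp [Nat.choose_eq_zero_of_lt h, Nat.choose_eq_zero_of_lt (by omega : m < k + 1)]

end Binomial

def legendreCoeff (n k : ℕ) : ℚ := n.choose k * (n + k).choose k

theorem legendreCoeff_eq_zero {n k : ℕ} (h : n < k) : legendreCoeff n k = 0 := by
  simp [legendreCoeff, Nat.choose_eq_zero_of_lt h]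

theorem legendreCoeff_eq_succ_left (n k : ℕ) :
    legendreCoeff n k = legendreCoeff (n + 1) k * (n + 1 - k) / (n + 1 + k) := by
  have h₁ := cast_choose_mul_succ_eq (K := ℚ) n k
  have h₂ := cast_choose_mul_succ_eq (K := ℚ) (n + k) k
  rw [eq_div_iff (by positivity), ← mul_right_cancel_iff_of_pos (by positivity : (0 : ℚ) < n + 1)]
  simp only [legendreCoeff, show n + 1 + k = n + k + 1 by omega]
  push_cast at h₂ ⊢
  linear_combination ((n + k).choose k * ((n : ℚ) + k + 1)) * h₁
    + ((n + 1).choose k * ((n : ℚ) + 1 - k)) * h₂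

theorem legendreCoeff_succ_right (n k : ℕ) :
    legendreCoeff n (k + 1) = legendreCoeff n k * (n - k) * (n + k + 1) / (k + 1) ^ 2 := by
  have h₁ := cast_choose_succ_right_eq (K := ℚ) n k
  have h₂ := congrArg (Nat.cast (R := ℚ)) (Nat.add_one_mul_choose_eq (n + k) k)
  rw [eq_div_iff (by positivity)]
  simp only [legendreCoeff, show n + (k + 1) = n + k + 1 by omega]
  push_cast at h₂ ⊢
  linear_combination ((n + k + 1).choose (k + 1) * ((k : ℚ) + 1)) * h₁
    - (n.choose k * ((n : ℚ) - k)) * h₂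

def term (n k : ℕ) : ℚ := legendreCoeff n k / (2 * k - 1)

/-- Zeilberger's certificate for the recurrence of `R`. -/
def certificate (n k : ℕ) : ℚ :=
  -4 * k ^ 2 * (n + 2) / ((n + k + 1) * (n + k + 2) * (n + k + 3)) * legendreCoeff (n + 3) k

theorem term_recurrence_eq_certificate_sub (n k : ℕ) :
    (n + 3) * term (n + 3) k - (7 * n + 13) * term (n + 2) k + (7 * n + 15) * term (n + 1) k
      - (n + 1) * term n k = certificate n (k + 1) - certificate n k := by
  have hk : 2 * (k : ℚ) - 1 ≠ 0 :=
    sub_ne_zero.2 (by exact_mod_cast (by omega : 2 * k ≠ 1))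
  simp only [term, certificate]
  rw [legendreCoeff_eq_succ_left n, legendreCoeff_eq_succ_left (n + 1),
    legendreCoeff_eq_succ_left (n + 2), legendreCoeff_succ_right (n + 3)]
  push_cast
  field_simp
  ring

theorem R_eq_sum_term {n m : ℕ} (h : n + 1 ≤ m) : R n = ∑ k ∈ range m, term n k := by
  rw [R]
  refine sum_subset (range_subset_range.2 h) (fun k _ hk ↦ ?_) |>.trans (sum_congr rfl ?_)
  · simp only [mem_range, not_lt] at hk
    simp [Nat.choose_eq_zero_of_lt (by omega : n < k)]
  · intro k _
    simp only [term, legendreCoeff, mul_one_div]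

theorem R_recurrence (n : ℕ) :
    (n + 3) * R (n + 3) = (7 * n + 13) * R (n + 2) - (7 * n + 15) * R (n + 1) + (n + 1) * R n := by
  have htel : ∑ k ∈ range (n + 4), ((n + 3) * term (n + 3) k - (7 * n + 13) * term (n + 2) k
      + (7 * n + 15) * term (n + 1) k - (n + 1) * term n k) = 0 := by
    rw [sum_congr rfl fun k _ ↦ term_recurrence_eq_certificate_sub n k, sum_range_sub]
    simp [certificate, legendreCoeff_eq_zero (by omega : n + 3 < n + 4)]
  simp only [sum_sub_distrib, sum_add_distrib, ← mul_sum] at htel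
  rw [R_eq_sum_term (m := n + 4) (by omega), R_eq_sum_term (m := n + 4) (by omega),
    R_eq_sum_term (m := n + 4) (by omega), R_eq_sum_term (n := n) (m := n + 4) (by omega)]
  linarith

theorem R_pos {n : ℕ} (hn : 1 ≤ n) : 0 < R n := by
  rw [R_eq_sum_term le_rfl, sum_range_succ']
  have hterm : ∀ k ∈ range n, 0 ≤ term n (k + 1) := fun k _ ↦
    div_nonneg (by unfold legendreCoeff; positivity) (by push_cast; linarith [k.cast_nonneg (α := ℚ)])
  have hone : term n 1 ≤ ∑ k ∈ range n, term n (k + 1) := single_le_sum hterm (mem_range.2 hn)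
  have h₀ : term n 0 = -1 := by simp [term, legendreCoeff]
  have h₁ : term n 1 = n * (n + 1) := by norm_num [term, legendreCoeff]
  have hn' : (1 : ℚ) ≤ n := by exact_mod_cast hn
  nlinarith

open Real

local notation "κ" => (3 + 2 * √2 : ℝ)

theorem kappa_sq : κ ^ 2 = 6 * κ - 1 := by
  linear_combination 4 * sq_sqrt (show (0 : ℝ) ≤ 2 by norm_num)

theorem kappa_bounds : 29 / 5 < κ ∧ κ < 59 / 10 := by
  have h₁ : (7 / 5 : ℝ) < √2 := by rw [lt_sqrt (by norm_num)]; norm_num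
  have h₂ : √2 < 29 / 20 := by rw [sqrt_lt' (by norm_num)]; norm_num
  constructor <;> linarith

theorem b_eq {k : ℕ} (hk : k ≠ 0) : b k = (2 * k - 3) * κ / (2 * k) := by
  have : (k : ℝ) ≠ 0 := by exact_mod_cast hk
  rw [b]
  field_simp
  ring

/-- `RatioBounds t x y` says `b t < y / x < b (t + 1)` (for `x > 0`), with `b` extended to real `t`. -/
def RatioBounds (t x y : ℝ) : Prop :=
  (2 * t - 3) * κ * x < 2 * t * y ∧ (2 * t + 2) * y < (2 * t - 1) * κ * x

section Step

variable {t x y z w : ℝ}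

theorem lower_step (ht : 4 ≤ t) (hz : 0 < z) (hxy : (2 * t + 2) * y < (2 * t - 1) * κ * x)
    (hyz : (2 * (t + 1) - 3) * κ * y < 2 * (t + 1) * z)
    (hrec : (t + 3) * w = (7 * t + 13) * z - (7 * t + 15) * y + (t + 1) * x) :
    (2 * (t + 2) - 3) * κ * z < 2 * (t + 2) * w := by
  obtain ⟨hκ, -⟩ := kappa_bounds
  have h₁ : 0 < 2 * t - 1 := by linarith
  have hK : 0 < (2 * t - 1) * (7 * t + 15) * κ - (t + 1) * (2 * t + 2) := by
    nlinarith [mul_pos (mul_pos h₁ (by linarith : 0 < 7 * t + 15)) (sub_pos.2 hκ)]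
  have hF : 0 < (-18 * t ^ 2 + 180 * t - 18) + (198 * t ^ 2 - 753 * t + 327) * κ := by
    nlinarith [mul_le_mul_of_nonneg_left hκ.le (by nlinarith : 0 ≤ 198 * t ^ 2 - 753 * t + 327)]
  -- The multipliers come from putting `y / x = z / y = b (t + 1)` into the recurrence.
  have key : (t + 3) * (2 * t - 1) ^ 2 * κ ^ 2 * (2 * (t + 2) * w - (2 * (t + 2) - 3) * κ * z)
      = (t + 1) * (2 * t + 4) * (2 * t - 1) * κ * ((2 * t - 1) * κ * x - (2 * t + 2) * y)
        + (2 * t + 4) * ((2 * t - 1) * (7 * t + 15) * κ - (t + 1) * (2 * t + 2))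
          * (2 * (t + 1) * z - (2 * (t + 1) - 3) * κ * y)
        + ((-18 * t ^ 2 + 180 * t - 18) + (198 * t ^ 2 - 753 * t + 327) * κ) * z := by
    linear_combination (2 * t + 4) * (2 * t - 1) ^ 2 * κ ^ 2 * hrec
      + z * ((2 * t + 4) * (2 * t - 1) ^ 2 * (7 * t + 13)
        - (t + 3) * (2 * t + 1) * (2 * t - 1) ^ 2 * (κ + 6)) * kappa_sq
  have hpos : 0 < (t + 3) * (2 * t - 1) ^ 2 * κ ^ 2
      * (2 * (t + 2) * w - (2 * (t + 2) - 3) * κ * z) := by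
    rw [key]
    have := sub_pos.2 hxy
    have := sub_pos.2 hyz
    positivity
  exact sub_pos.1 (pos_of_mul_pos_right hpos (by positivity))

theorem upper_step (ht : 4 ≤ t) (hz : 0 < z) (hxy : (2 * t - 3) * κ * x < 2 * t * y)
    (hyz : (2 * (t + 1) + 2) * z < (2 * (t + 1) - 1) * κ * y)
    (hrec : (t + 3) * w = (7 * t + 13) * z - (7 * t + 15) * y + (t + 1) * x) :
    (2 * (t + 2) + 2) * w < (2 * (t + 2) - 1) * κ * z := by
  obtain ⟨hκ, -⟩ := kappa_bounds
  have h₃ : 0 < 2 * t - 3 := by linarith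
  have hK : 0 < (2 * t - 3) * (7 * t + 15) * κ - (t + 1) * (2 * t) := by
    nlinarith [mul_pos (mul_pos h₃ (by linarith : 0 < 7 * t + 15)) (sub_pos.2 hκ)]
  have hF : 0 < (-54 * t ^ 2 - 186 * t - 72) + (138 * t ^ 2 + 207 * t - 621) * κ := by
    nlinarith [mul_le_mul_of_nonneg_left hκ.le (by nlinarith : 0 ≤ 138 * t ^ 2 + 207 * t - 621)]
  -- The multipliers come from putting `y / x = b t` and `z / y = b (t + 2)` into the recurrence.
  have key : (t + 3) * (2 * t + 1) * (2 * t - 3) * κ ^ 2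
        * ((2 * (t + 2) - 1) * κ * z - (2 * (t + 2) + 2) * w)
      = (t + 1) * (2 * t + 6) * (2 * t + 1) * κ * (2 * t * y - (2 * t - 3) * κ * x)
        + (2 * t + 6) * ((2 * t - 3) * (7 * t + 15) * κ - (t + 1) * (2 * t))
          * ((2 * (t + 1) - 1) * κ * y - (2 * (t + 1) + 2) * z)
        + ((-54 * t ^ 2 - 186 * t - 72) + (138 * t ^ 2 + 207 * t - 621) * κ) * z := by
    linear_combination -(2 * t + 6) * (2 * t + 1) * (2 * t - 3) * κ ^ 2 * hrec
      + z * ((t + 3) * (2 * t + 3) * (2 * t + 1) * (2 * t - 3) * (κ + 6)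
        - (2 * t + 6) * (7 * t + 13) * (2 * t + 1) * (2 * t - 3)) * kappa_sq
  have hpos : 0 < (t + 3) * (2 * t + 1) * (2 * t - 3) * κ ^ 2
      * ((2 * (t + 2) - 1) * κ * z - (2 * (t + 2) + 2) * w) := by
    rw [key]
    have := sub_pos.2 hxy
    have := sub_pos.2 hyz
    positivity
  exact sub_pos.1 (pos_of_mul_pos_right hpos (by positivity))

theorem RatioBounds.step (ht : 4 ≤ t) (hz : 0 < z) (h₀ : RatioBounds t x y)
    (h₁ : RatioBounds (t + 1) y z)
    (hrec : (t + 3) * w = (7 * t + 13) * z - (7 * t + 15) * y + (t + 1) * x) :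
    RatioBounds (t + 2) z w :=
  ⟨lower_step ht hz h₀.2 h₁.1 hrec, upper_step ht hz h₀.1 h₁.2 hrec⟩

end Step

theorem R_three_to_six : R 3 = 25 ∧ R 4 = 87 ∧ R 5 = 329 ∧ R 6 = 1359 := by
  norm_num [R, sum_range_succ, Nat.choose]

theorem ratioBounds_R_add_two {n : ℕ} (hn : 4 ≤ n) (h₀ : RatioBounds n (R n) (R (n + 1)))
    (h₁ : RatioBounds (n + 1 : ℕ) (R (n + 1)) (R (n + 2))) :
    RatioBounds (n + 2 : ℕ) (R (n + 2)) (R (n + 3)) := by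
  have hrec : ((n : ℝ) + 3) * R (n + 3)
      = (7 * n + 13) * R (n + 2) - (7 * n + 15) * R (n + 1) + (n + 1) * R n := by
    exact_mod_cast R_recurrence n
  have hz : (0 : ℝ) < R (n + 2) := by exact_mod_cast R_pos (by omega)
  push_cast at h₁ ⊢
  exact h₀.step (by exact_mod_cast hn) hz h₁ hrec

theorem ratioBounds_R : ∀ n : ℕ, 3 ≤ n → RatioBounds n (R n) (R (n + 1))
  | 0, h | 1, h | 2, h => by omega
  | 3, _ | 4, _ | 5, _ => by
    obtain ⟨h₃, h₄, h₅, h₆⟩ := R_three_to_six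
    have := kappa_bounds
    constructor <;> norm_num [h₃, h₄, h₅, h₆] <;> linarith
  | n + 6, _ =>
    ratioBounds_R_add_two (by omega) (ratioBounds_R (n + 4) (by omega))
      (ratioBounds_R (n + 5) (by omega))

theorem stmt_4 : ∀ n : ℕ, 3 ≤ n →
    b n < ((R (n + 1) : ℝ) / (R n : ℝ)) ∧ ((R (n + 1) : ℝ) / (R n : ℝ)) < b (n + 1) := by
  intro n hn
  obtain ⟨hlower, hupper⟩ := ratioBounds_R n hn
  have hR : (0 : ℝ) < R n := by exact_mod_cast R_pos (by omega)
  rw [b_eq (by omega), b_eq (by omega), div_lt_div_iff₀ (by positivity) hR,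
    div_lt_div_iff₀ hR (by positivity)]
  push_cast
  constructor <;> linarith
end

section
/- The sequence R_n^{1/n} converges to 3 + 2\sqrt{2} as n \to \infty. -/
open Finset Real Filter Topology

namespace Nat

theorem sum_range_choose_mul_choose (n j : ℕ) :
    ∑ k ∈ range (n + 1), n.choose k * k.choose j = n.choose j * 2 ^ (n - j) := by
  rcases lt_or_ge n j with hnj | hjn
  · rw [choose_eq_zero_of_lt hnj, zero_mul]
    exact sum_eq_zero fun k hk =>
      by rw [choose_eq_zero_of_lt (n := k) (by grind), mul_zero]
  · obtain ⟨m, rfl⟩ := exists_add_of_le hjn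
    rw [show j + m + 1 = j + (m + 1) by ring, sum_range_add,
      sum_eq_zero fun k hk => by rw [choose_eq_zero_of_lt (mem_range.1 hk), mul_zero],
      zero_add, Nat.add_sub_cancel_left, ← sum_range_choose, mul_sum]
    refine sum_congr rfl fun i _ => ?_
    rw [choose_mul (le_add_right j i)]
    simp

theorem add_choose_eq_sum_choose_mul_choose (n k : ℕ) :
    (n + k).choose k = ∑ j ∈ range (n + 1), n.choose j * k.choose j := by
  rw [← choose_symm_add, add_choose_eq, Finset.Nat.sum_antidiagonal_eq_sum_range_succ_mk,
    ← sum_range_reflect]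
  refine sum_congr rfl fun j hj => ?_
  have hj : j ≤ n := by grind
  rw [succ_sub_one, Nat.sub_sub_self hj, choose_symm hj]

end Nat

def centralDelannoy (n : ℕ) : ℕ := ∑ k ∈ range (n + 1), n.choose k * (n + k).choose k

theorem centralDelannoy_eq_sum_choose_sq_mul_two_pow (n : ℕ) :
    centralDelannoy n = ∑ j ∈ range (n + 1), n.choose j ^ 2 * 2 ^ (n - j) := by
  simp_rw [centralDelannoy, Nat.add_choose_eq_sum_choose_mul_choose, mul_sum]
  rw [sum_comm]
  refine sum_congr rfl fun j _ => ?_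
  rw [sq, mul_assoc, ← Nat.sum_range_choose_mul_choose, mul_sum]
  exact sum_congr rfl fun k _ => by ring

theorem one_add_sqrt_two_sq : (1 + √2) ^ 2 = 3 + 2 * √2 := by
  rw [add_sq, sq_sqrt zero_le_two]
  ring

theorem sum_choose_mul_sqrt_two_pow (n : ℕ) :
    ∑ j ∈ range (n + 1), (n.choose j : ℝ) * √2 ^ (n - j) = (1 + √2) ^ n := by
  rw [add_pow]
  exact sum_congr rfl fun j _ => by ring

theorem centralDelannoy_eq_sum_sq (n : ℕ) :
    (centralDelannoy n : ℝ) =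
      ∑ j ∈ range (n + 1), ((n.choose j : ℝ) * √2 ^ (n - j)) ^ 2 := by
  rw [centralDelannoy_eq_sum_choose_sq_mul_two_pow]
  push_cast
  refine sum_congr rfl fun j _ => ?_
  rw [mul_pow, ← pow_mul, mul_comm (n - j), pow_mul, sq_sqrt zero_le_two]

theorem centralDelannoy_le_pow (n : ℕ) : (centralDelannoy n : ℝ) ≤ (3 + 2 * √2) ^ n := by
  rw [centralDelannoy_eq_sum_sq, ← one_add_sqrt_two_sq, ← pow_mul, mul_comm, pow_mul,
    ← sum_choose_mul_sqrt_two_pow]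
  exact sum_sq_le_sq_sum_of_nonneg fun j _ => by positivity

theorem pow_le_succ_mul_centralDelannoy (n : ℕ) :
    (3 + 2 * √2) ^ n ≤ (n + 1) * (centralDelannoy n : ℝ) := by
  rw [centralDelannoy_eq_sum_sq, ← one_add_sqrt_two_sq, ← pow_mul, mul_comm, pow_mul,
    ← sum_choose_mul_sqrt_two_pow]
  simpa using sq_sum_le_card_mul_sum_sq (s := range (n + 1))
    (f := fun j => (n.choose j : ℝ) * √2 ^ (n - j))

theorem R_le_centralDelannoy (n : ℕ) : R n ≤ centralDelannoy n := by
  rw [R, centralDelannoy]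
  push_cast
  refine sum_le_sum fun k _ => mul_le_of_le_one_right (by positivity) ?_
  rcases k with _ | k
  · norm_num
  · rw [div_le_one (by push_cast; linarith)]
    push_cast
    linarith

theorem centralDelannoy_div_le_R_add_two (n : ℕ) :
    (centralDelannoy n : ℚ) / (2 * n + 1) ≤ R n + 2 := by
  rw [R, centralDelannoy]
  push_cast
  rw [sum_div, sum_range_succ', sum_range_succ']
  have hterm : ∀ i ∈ range n,
      (n.choose (i + 1) : ℚ) * ((n + (i + 1)).choose (i + 1) : ℚ) / (2 * n + 1) ≤
        (n.choose (i + 1) : ℚ) * ((n + (i + 1)).choose (i + 1) : ℚ) *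
          (1 / (2 * ((i + 1 : ℕ) : ℚ) - 1)) := by
    intro i hi
    have hin : (i : ℚ) + 1 ≤ n := by exact_mod_cast mem_range.1 hi
    rw [div_eq_mul_one_div]
    gcongr
    · push_cast; linarith
    · push_cast; linarith
  have hzero : (1 : ℚ) / (2 * n + 1) ≤ 1 := by
    rw [div_le_one (by positivity)]
    linarith [n.cast_nonneg (α := ℚ)]
  have hsum := sum_le_sum hterm
  simp only [Nat.choose_zero_right, add_zero, Nat.cast_one, CharP.cast_eq_zero, mul_zero,
    one_mul, zero_sub, div_neg, div_one]
  linarith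

theorem tendsto_rpow_one_div_of_le_of_le {a : ℕ → ℝ} {c : ℝ} (hc : 0 ≤ c) (k : ℕ)
    (hlow : ∀ᶠ n : ℕ in atTop, c ^ n / ((n : ℝ) + 1) ^ k ≤ a n)
    (hup : ∀ᶠ n : ℕ in atTop, a n ≤ c ^ n) :
    Tendsto (fun n : ℕ => a n ^ (1 / (n : ℝ))) atTop (𝓝 c) := by
  have hroot : Tendsto (fun n : ℕ => ((n : ℝ) + 1) ^ (1 / (n : ℝ))) atTop (𝓝 1) := by
    refine ((tendsto_rpow_div_mul_add 1 1 (-1) one_ne_zero.symm).comp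
      (tendsto_atTop_add_const_right atTop 1 tendsto_natCast_atTop_atTop)).congr fun n => ?_
    simp
  have hpow_root (n : ℕ) (hn : n ≠ 0) : (c ^ n) ^ (1 / (n : ℝ)) = c := by
    rw [one_div, pow_rpow_inv_natCast hc hn]
  have hlim :
      Tendsto (fun n : ℕ => c / (((n : ℝ) + 1) ^ (1 / (n : ℝ))) ^ k) atTop (𝓝 c) := by
    simpa [Pi.div_def] using (tendsto_const_nhds (x := c)).div (hroot.pow k) (by simp)
  refine tendsto_of_tendsto_of_tendsto_of_le_of_le' hlim tendsto_const_nhds ?_ ?_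
  · filter_upwards [hlow, eventually_ne_atTop 0] with n hlo hn
    calc c / (((n : ℝ) + 1) ^ (1 / (n : ℝ))) ^ k
        = (c ^ n / ((n : ℝ) + 1) ^ k) ^ (1 / (n : ℝ)) := by
          rw [div_rpow (by positivity) (by positivity), hpow_root n hn,
            rpow_pow_comm (by positivity)]
      _ ≤ a n ^ (1 / (n : ℝ)) := rpow_le_rpow (by positivity) hlo (by positivity)
  · filter_upwards [hlow, hup, eventually_ne_atTop 0] with n hlo hup hn
    calc a n ^ (1 / (n : ℝ)) ≤ (c ^ n) ^ (1 / (n : ℝ)) :=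
          rpow_le_rpow ((by positivity : (0 : ℝ) ≤ c ^ n / ((n : ℝ) + 1) ^ k).trans hlo) hup
            (by positivity)
      _ = c := hpow_root n hn

theorem tendsto_pow_div_succ_pow_atTop {r : ℝ} (hr : 1 < r) (k : ℕ) :
    Tendsto (fun n : ℕ => r ^ n / ((n : ℝ) + 1) ^ k) atTop atTop := by
  have h := ((tendsto_pow_const_div_const_pow_of_one_lt k hr).comp
    (tendsto_add_atTop_nat 1)).const_mul r
  rw [mul_zero] at h
  have h' : Tendsto (fun n : ℕ => ((n : ℝ) + 1) ^ k / r ^ n) atTop (𝓝[>] 0) := by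
    have hr0 : 0 < r := by positivity
    refine tendsto_nhdsWithin_iff.2 ⟨h.congr fun n => ?_, Eventually.of_forall fun n => ?_⟩
    · simp only [Function.comp, Nat.cast_add, Nat.cast_one, pow_succ]
      field_simp
    · exact Set.mem_Ioi.2 (by positivity)
  exact h'.inv_tendsto_nhdsGT_zero.congr fun n => inv_div _ _

theorem pow_le_mul_R_add_two (n : ℕ) :
    (3 + 2 * √2) ^ n ≤ (n + 1) * ((2 * n + 1) * ((R n : ℝ) + 2)) := by
  have h : (centralDelannoy n : ℝ) ≤ (2 * n + 1) * ((R n : ℝ) + 2) := by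
    have := centralDelannoy_div_le_R_add_two n
    rw [div_le_iff₀ (by positivity), mul_comm] at this
    exact_mod_cast this
  exact (pow_le_succ_mul_centralDelannoy n).trans (by gcongr)

theorem eventually_pow_div_succ_cube_le_R :
    ∀ᶠ n : ℕ in atTop, (3 + 2 * √2) ^ n / ((n : ℝ) + 1) ^ 3 ≤ R n := by
  have hc : 1 < 3 + 2 * √2 := by linarith [sqrt_nonneg 2]
  -- once `x ≥ 2` and `n ≥ 3`, the extra factor `n + 1` in `x` absorbs the additive `2`
  filter_upwards [(tendsto_pow_div_succ_pow_atTop hc 3).eventually_ge_atTop 2,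
    eventually_ge_atTop 3] with n hbig hn
  set x := (3 + 2 * √2) ^ n / ((n : ℝ) + 1) ^ 3
  have hn : (3 : ℝ) ≤ n := by exact_mod_cast hn
  have hlow : x * ((n : ℝ) + 1) ^ 2 ≤ (2 * n + 1) * ((R n : ℝ) + 2) := by
    refine le_of_mul_le_mul_left ?_ (by positivity : (0 : ℝ) < n + 1)
    calc ((n : ℝ) + 1) * (x * ((n : ℝ) + 1) ^ 2) = (3 + 2 * √2) ^ n := by
          simp only [x]; field_simp
      _ ≤ _ := pow_le_mul_R_add_two n
  have hx : (2 * n + 1) * (x + 2) ≤ (2 * n + 1) * ((R n : ℝ) + 2) :=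
    calc (2 * n + 1) * (x + 2) ≤ (2 * n + 1) * (2 * x) := by gcongr; linarith
      _ ≤ x * ((n : ℝ) + 1) ^ 2 := by
        nlinarith [mul_nonneg (mul_nonneg (sub_nonneg.2 hn) (by linarith : (0 : ℝ) ≤ x))
          (by linarith : (0 : ℝ) ≤ n + 1)]
      _ ≤ _ := hlow
  linarith [le_of_mul_le_mul_left hx (by positivity)]

theorem stmt_13 :
    Filter.Tendsto (fun n : ℕ => (R n : ℝ) ^ (1 / (n : ℝ))) Filter.atTop
      (nhds (3 + 2 * Real.sqrt 2)) := by
  have hup (n : ℕ) : (R n : ℝ) ≤ (3 + 2 * √2) ^ n :=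
    (by exact_mod_cast R_le_centralDelannoy n : (R n : ℝ) ≤ centralDelannoy n).trans
      (centralDelannoy_le_pow n)
  exact tendsto_rpow_one_div_of_le_of_le (by positivity) 3 eventually_pow_div_succ_cube_le_R
    (Eventually.of_forall hup)
end
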